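/- arXiv:1507.08193 — 3 statements merged into one kernel-verified Lean document; each statement's English description precedes it below -/
import Mathlib

section
/- Let v be an n×n Hermitian matrix whose eigenvalue vector lies in the cone Γ₂ = {λ ∈ ℝⁿ : σ₁(λ) > 0, σ₂(λ) > 0}, assume v is diagonal with entries v_1,…,v_n, and let A ∈ ℂⁿ. Then −Σ_{i≠j} A_i Ā_j ≥ −|Σ_i σ₂^{ii}(v) A_i|² / σ₂(v), where σ₂^{ii}(v) = Σ_{k≠i} v_k. -/
open Finset

def sigma1 {n : ℕ} (lam : Fin n → ℝ) : ℝ := ∑ j, lam j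

def sigma2 {n : ℕ} (lam : Fin n → ℝ) : ℝ :=
  ∑ j, ∑ k ∈ Finset.univ.filter (fun k => j < k), lam j * lam k

/-!
Write `s = ∑ k, v k`, so that `∑ k ≠ i, v k = s - v i` and `2 σ₂(v) = s² - ∑ v k ²`. The claim
then follows, even with `2 σ₂` in place of `σ₂`, from Aczél's inequality
`(s² - ∑ v k ²) (‖∑ A i‖² - ∑ ‖A i‖²) ≤ ‖s ∑ A i - ∑ v i A i‖²`, valid in any real normed space as
soon as `∑ v k ² ≤ s²`. The triangle and Cauchy–Schwarz inequalities reduce Aczél's inequality to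
its two-dimensional case, which is the identity `(a² - c²)(b² - d²) = (ab - cd)² - (ad - bc)²`.
-/

theorem sq_sub_sq_mul_sq_sub_sq_le {a b c d N : ℝ} (hc : 0 ≤ c) (hca : c ≤ a) (hb : 0 ≤ b)
    (hd : 0 ≤ d) (hN : a * b - c * d ≤ N) : (a ^ 2 - c ^ 2) * (b ^ 2 - d ^ 2) ≤ N ^ 2 := by
  rcases le_or_gt b d with hbd | hdb
  · nlinarith [mul_nonneg (sub_nonneg.2 hca) (add_nonneg hc (hc.trans hca)),
      mul_le_mul hbd hbd hb hd]
  · have hpos : 0 ≤ a * b - c * d := by nlinarith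
    calc (a ^ 2 - c ^ 2) * (b ^ 2 - d ^ 2) = (a * b - c * d) ^ 2 - (a * d - b * c) ^ 2 := by ring
      _ ≤ (a * b - c * d) ^ 2 := by nlinarith [sq_nonneg (a * d - b * c)]
      _ ≤ N ^ 2 := pow_le_pow_left₀ hpos hN 2

theorem aczel_norm {ι E : Type*} [Fintype ι] [SeminormedAddCommGroup E] [NormedSpace ℝ E]
    (a : ℝ) (t : E) (v : ι → ℝ) (x : ι → E) (hv : ∑ i, v i ^ 2 ≤ a ^ 2) :
    (a ^ 2 - ∑ i, v i ^ 2) * (‖t‖ ^ 2 - ∑ i, ‖x i‖ ^ 2) ≤ ‖a • t - ∑ i, v i • x i‖ ^ 2 := by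
  have hcs : ‖∑ i, v i • x i‖ ≤ √(∑ i, v i ^ 2) * √(∑ i, ‖x i‖ ^ 2) :=
    calc ‖∑ i, v i • x i‖ ≤ ∑ i, |v i| * ‖x i‖ := by
          simpa only [norm_smul, Real.norm_eq_abs] using norm_sum_le univ fun i => v i • x i
      _ ≤ √(∑ i, |v i| ^ 2) * √(∑ i, ‖x i‖ ^ 2) := Real.sum_mul_le_sqrt_mul_sqrt _ _ _
      _ = √(∑ i, v i ^ 2) * √(∑ i, ‖x i‖ ^ 2) := by simp only [sq_abs]
  have hnorm : |a| * ‖t‖ - √(∑ i, v i ^ 2) * √(∑ i, ‖x i‖ ^ 2) ≤ ‖a • t - ∑ i, v i • x i‖ :=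
    calc |a| * ‖t‖ - √(∑ i, v i ^ 2) * √(∑ i, ‖x i‖ ^ 2)
        ≤ ‖a • t‖ - ‖∑ i, v i • x i‖ := by rw [norm_smul, Real.norm_eq_abs]; linarith
      _ ≤ ‖a • t - ∑ i, v i • x i‖ := norm_sub_norm_le _ _
  have key := sq_sub_sq_mul_sq_sub_sq_le (Real.sqrt_nonneg _)
    ((Real.sqrt_le_sqrt hv).trans_eq (Real.sqrt_sq_eq_abs a)) (norm_nonneg t)
    (Real.sqrt_nonneg _) hnorm
  rwa [sq_abs, Real.sq_sqrt (sum_nonneg fun i _ => sq_nonneg _),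
    Real.sq_sqrt (sum_nonneg fun i _ => sq_nonneg _)] at key

theorem two_mul_sigma2 {n : ℕ} (v : Fin n → ℝ) :
    2 * sigma2 v = (∑ j, v j) ^ 2 - ∑ j, v j ^ 2 := by
  have hlt : sigma2 v = ∑ j, ∑ k, if j < k then v j * v k else 0 := by
    simp only [sigma2, sum_filter]
  have hgt : sigma2 v = ∑ j, ∑ k, if k < j then v j * v k else 0 := by
    rw [hlt, sum_comm]
    simp only [mul_comm]
  have hdiag : ∑ j, v j ^ 2 = ∑ j, ∑ k, if j = k then v j * v k else 0 := by
    simp [sq]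
  have hsplit : (∑ j, v j) ^ 2 = ∑ j, ∑ k, ((if j < k then v j * v k else 0) +
      (if k < j then v j * v k else 0) + (if j = k then v j * v k else 0)) := by
    rw [sq, sum_mul_sum]
    refine sum_congr rfl fun j _ => sum_congr rfl fun k _ => ?_
    rcases lt_trichotomy j k with h | rfl | h
    · simp [h, h.not_gt, h.ne]
    · simp
    · simp [h, h.not_gt, h.ne']
  simp only [sum_add_distrib] at hsplit
  linarith

theorem re_sum_sum_erase_mul_conj {ι : Type*} [Fintype ι] [DecidableEq ι] (A : ι → ℂ) :
    (∑ i, ∑ j ∈ univ.erase i, A i * starRingEnd ℂ (A j)).re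
      = ‖∑ i, A i‖ ^ 2 - ∑ i, ‖A i‖ ^ 2 := by
  simp_rw [← mul_sum, sum_erase_eq_sub (mem_univ _), mul_sub, sum_sub_distrib, ← sum_mul,
    ← map_sum, Complex.mul_conj', Complex.sub_re, Complex.re_sum]
  norm_cast

theorem sum_ofReal_sum_erase_mul {ι : Type*} [Fintype ι] [DecidableEq ι] (v : ι → ℝ) (A : ι → ℂ) :
    ∑ i, ((∑ k ∈ univ.erase i, v k : ℝ) : ℂ) * A i
      = (∑ k, v k) • ∑ i, A i - ∑ i, v i • A i := by
  simp only [sum_erase_eq_sub (mem_univ _), Complex.real_smul, Complex.ofReal_sub,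
    Complex.ofReal_sum, sub_mul, sum_sub_distrib, mul_sum]

/-- Guan–Ren–Wang inequality: for a diagonal matrix v with eigenvalues in Γ₂ and any A ∈ ℂⁿ,
−Σ_{i≠j} A_i Ā_j ≥ −|Σ_i σ₂^{ii}(v) A_i|² / σ₂(v), where σ₂^{ii}(v) = Σ_{k≠i} v_k. -/
theorem stmt2 (n : ℕ) (v : Fin n → ℝ)
    (hv : 0 < sigma1 v ∧ 0 < sigma2 v) (A : Fin n → ℂ) :
    -(∑ i, ∑ j ∈ Finset.univ.erase i, A i * (starRingEnd ℂ) (A j)).re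
      ≥ -(‖∑ i, ((∑ k ∈ Finset.univ.erase i, v k : ℝ) : ℂ) * A i‖)^2
          / sigma2 v := by
  have key := aczel_norm (∑ k, v k) (∑ i, A i) v A (by linarith [hv.2, two_mul_sigma2 v])
  rw [← two_mul_sigma2] at key
  rw [re_sum_sum_erase_mul_conj, sum_ofReal_sum_erase_mul, ge_iff_le, neg_div, neg_le_neg_iff,
    le_div_iff₀ hv.2]
  obtain hL | hL := le_or_gt 0 (‖∑ i, A i‖ ^ 2 - ∑ i, ‖A i‖ ^ 2)
  · linarith [mul_nonneg hL hv.2.le]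
  · exact (mul_neg_of_neg_of_pos hL hv.2).le.trans (sq_nonneg _)
end

section
/- The function H(λ) = σ₂(λ)/σ₁(λ) is concave on the cone Γ₂ = {λ ∈ ℝⁿ : σ₁(λ) > 0, σ₂(λ) > 0}. -/
open Finset

lemma two_sigma2 {n : ℕ} (lam : Fin n → ℝ) :
    2 * sigma2 lam = (sigma1 lam) ^ 2 - ∑ j, (lam j) ^ 2 := by
  have h1 : (sigma1 lam) ^ 2 = ∑ j, ∑ k, lam j * lam k := by
    rw [sigma1, sq, Finset.sum_mul_sum]
  have hswap : (∑ j, ∑ k ∈ Finset.univ.filter (fun k => k < j), lam j * lam k)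
      = sigma2 lam := by
    rw [sigma2]
    simp only [Finset.sum_filter]
    rw [Finset.sum_comm]
    refine Finset.sum_congr rfl fun j _ => Finset.sum_congr rfl fun k _ => ?_
    by_cases h : j < k <;> simp [h, mul_comm]
  have hsplit : ∀ j : Fin n, (∑ k, lam j * lam k)
      = (∑ k ∈ Finset.univ.filter (fun k => j < k), lam j * lam k)
      + ((∑ k ∈ Finset.univ.filter (fun k => k < j), lam j * lam k) + lam j ^ 2) := by
    intro j
    rw [← Finset.sum_filter_add_sum_filter_not Finset.univ (fun k => j < k)]
    congr 1
    have hins : Finset.univ.filter (fun k => ¬ j < k)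
        = insert j (Finset.univ.filter (fun k : Fin n => k < j)) := by
      ext k
      simp only [Finset.mem_filter, Finset.mem_univ, true_and, Finset.mem_insert, not_lt]
      constructor
      · intro h
        rcases lt_or_eq_of_le h with h' | h'
        · exact Or.inr h'
        · exact Or.inl h'
      · rintro (rfl | h)
        · exact le_refl _
        · exact le_of_lt h
    rw [hins, Finset.sum_insert (by simp)]
    ring
  have h2 : (sigma1 lam) ^ 2 = sigma2 lam + (sigma2 lam + ∑ j, lam j ^ 2) := by
    rw [h1]
    simp only [hsplit]
    rw [Finset.sum_add_distrib, Finset.sum_add_distrib, hswap, sigma2]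
  linarith

lemma sigma1_comb {n : ℕ} (x y : Fin n → ℝ) (a b : ℝ) :
    sigma1 (a • x + b • y) = a * sigma1 x + b * sigma1 y := by
  simp [sigma1, Finset.sum_add_distrib, Finset.mul_sum]

lemma combo_pos {a b A B : ℝ} (ha : 0 ≤ a) (hb : 0 ≤ b) (hab : a + b = 1)
    (hA : 0 < A) (hB : 0 < B) : 0 < a * A + b * B := by
  rcases eq_or_lt_of_le ha with h | h
  · have hb1 : b = 1 := by linarith
    rw [← h, hb1]; simpa using hB
  · nlinarith [mul_nonneg hb hB.le]

lemma Hconcave {n : ℕ} (x y : Fin n → ℝ) (hx : 0 < sigma1 x) (hy : 0 < sigma1 y)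
    (a b : ℝ) (ha : 0 ≤ a) (hb : 0 ≤ b) (hab : a + b = 1) :
    a * (sigma2 x / sigma1 x) + b * (sigma2 y / sigma1 y)
      ≤ sigma2 (a • x + b • y) / sigma1 (a • x + b • y) := by
  set s := sigma1 x with hs
  set t := sigma1 y with ht
  set p : ℝ := ∑ j, (x j) ^ 2 with hp
  set q : ℝ := ∑ j, (y j) ^ 2 with hq
  set r : ℝ := ∑ j, x j * y j with hr
  have hu1 : sigma1 (a • x + b • y) = a * s + b * t := sigma1_comb x y a b
  have hu : 0 < a * s + b * t := combo_pos ha hb hab hx hy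
  -- quadratic form of the combination
  have hQz : (∑ j, ((a • x + b • y) j) ^ 2)
      = a ^ 2 * p + 2 * a * b * r + b ^ 2 * q := by
    rw [hp, hq, hr]
    simp only [Pi.add_apply, Pi.smul_apply, smul_eq_mul, Finset.mul_sum,
      ← Finset.sum_add_distrib]
    exact Finset.sum_congr rfl fun j _ => by ring
  -- key Cauchy–Schwarz type inequality
  have hkey : 2 * s * t * r ≤ t ^ 2 * p + s ^ 2 * q := by
    have h0 : (0 : ℝ) ≤ ∑ j, (t * x j - s * y j) ^ 2 :=
      Finset.sum_nonneg fun j _ => sq_nonneg _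
    have hexp : (∑ j, (t * x j - s * y j) ^ 2)
        = t ^ 2 * p - 2 * s * t * r + s ^ 2 * q := by
      rw [hp, hq, hr]
      simp only [Finset.mul_sum, ← Finset.sum_add_distrib, ← Finset.sum_sub_distrib]
      exact Finset.sum_congr rfl fun j _ => by ring
    linarith
  have hpx : sigma2 x = (s ^ 2 - p) / 2 := by
    have := two_sigma2 x; rw [← hs, ← hp] at this; linarith
  have hpy : sigma2 y = (t ^ 2 - q) / 2 := by
    have := two_sigma2 y; rw [← ht, ← hq] at this; linarith
  have hpz : sigma2 (a • x + b • y)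
      = ((a * s + b * t) ^ 2 - (a ^ 2 * p + 2 * a * b * r + b ^ 2 * q)) / 2 := by
    have := two_sigma2 (a • x + b • y)
    rw [hu1, hQz] at this; linarith
  rw [hpx, hpy, hpz, hu1]
  have hk : (0 : ℝ) ≤ t ^ 2 * p + s ^ 2 * q - 2 * s * t * r := by linarith
  have h2 : a * ((s ^ 2 - p) / 2 / s) + b * ((t ^ 2 - q) / 2 / t)
      = (a * (s ^ 2 - p) * t + b * (t ^ 2 - q) * s) / (2 * (s * t)) := by
    field_simp
  rw [h2, div_div, div_le_div_iff₀ (by positivity) (by positivity)]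
  nlinarith [mul_nonneg (mul_nonneg ha hb) hk]

/-- H(λ) = σ₂(λ)/σ₁(λ) is concave on the cone Γ₂. -/
theorem stmt3 (n : ℕ) (hn : 2 ≤ n) :
    ConcaveOn ℝ {lam : Fin n → ℝ | 0 < sigma1 lam ∧ 0 < sigma2 lam}
      (fun lam => sigma2 lam / sigma1 lam) := by
  constructor
  · intro x hx y hy a b ha hb hab
    have h1 : 0 < sigma1 (a • x + b • y) := by
      rw [sigma1_comb]; exact combo_pos ha hb hab hx.1 hy.1
    refine ⟨h1, ?_⟩
    have hH := Hconcave x y hx.1 hy.1 a b ha hb hab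
    have hpos : 0 < a * (sigma2 x / sigma1 x) + b * (sigma2 y / sigma1 y) :=
      combo_pos ha hb hab (div_pos hx.2 hx.1) (div_pos hy.2 hy.1)
    have hdiv : 0 < sigma2 (a • x + b • y) / sigma1 (a • x + b • y) := lt_of_lt_of_le hpos hH
    rcases div_pos_iff.mp hdiv with ⟨h, _⟩ | ⟨_, h⟩
    · exact h
    · linarith
  · intro x hx y hy a b ha hb hab
    simpa [smul_eq_mul] using Hconcave x y hx.1 hy.1 a b ha hb hab
end

section
/- Let λ' ∈ Γ₂ ⊂ ℝⁿ (n ≥ 2) with λ'_1 ≥ λ'_j for all j. Then λ'_1 · σ₁(λ'|1) ≥ (2/n)·σ₂(λ'), where σ₁(λ'|1) = Σ_{j≥2} λ'_j. -/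
open Finset

lemma key {n : ℕ} (f : Fin n → ℝ) :
    (∑ j, f j)^2 = (∑ j, (f j)^2) + 2 * sigma2 f := by
  classical
  have h1 : (∑ j, f j)^2 = ∑ j : Fin n, ∑ k : Fin n, f j * f k := by
    rw [sq, Finset.sum_mul_sum]
  have hswap : ∑ j : Fin n, ∑ k ∈ univ.filter (fun k => k < j), f j * f k
      = sigma2 f := by
    simp only [Finset.sum_filter]
    rw [Finset.sum_comm]
    unfold sigma2
    simp only [Finset.sum_filter]
    refine Finset.sum_congr rfl fun j _ => Finset.sum_congr rfl fun k _ => ?_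
    rw [mul_comm]
  have h2 : ∀ j : Fin n, (∑ k : Fin n, f j * f k) =
      (f j)^2 + ((∑ k ∈ univ.filter (fun k => j < k), f j * f k)
        + ∑ k ∈ univ.filter (fun k => k < j), f j * f k) := by
    intro j
    rw [← Finset.sum_filter_add_sum_filter_not univ (fun k => j < k)]
    have : univ.filter (fun k => ¬ j < k) = insert j (univ.filter (fun k => k < j)) := by
      ext k
      simp [not_lt, le_iff_lt_or_eq, or_comm, eq_comm]
    rw [this, Finset.sum_insert (by simp), sq]
    ring
  rw [h1]
  simp only [h2]
  rw [Finset.sum_add_distrib, Finset.sum_add_distrib, hswap]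
  unfold sigma2
  ring

/-- If λ' ∈ Γ₂ and λ'_1 is the largest entry, then λ'_1·σ₁(λ'|1) ≥ (2/n)·σ₂(λ'). -/
theorem stmt4 (n : ℕ) (hn : 2 ≤ n) (lam' : Fin n → ℝ)
    (hΓ : 0 < sigma1 lam' ∧ 0 < sigma2 lam')
    (hmax : ∀ j, lam' j ≤ lam' ⟨0, by omega⟩) :
    lam' ⟨0, by omega⟩ * (∑ j ∈ Finset.univ.erase ⟨0, by omega⟩, lam' j)
      ≥ (2 / (n:ℝ)) * sigma2 lam' := by
  classical
  obtain ⟨hS, hσ2⟩ := hΓ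
  set e0 : Fin n := ⟨0, by omega⟩ with he0
  set μ : ℝ := lam' e0 with hμdef
  set t : ℝ := ∑ j ∈ Finset.univ.erase e0, lam' j with ht
  set Q' : ℝ := ∑ j ∈ Finset.univ.erase e0, (lam' j)^2 with hQ'
  have hcard : (Finset.univ.erase e0).card = n - 1 := by
    rw [Finset.card_erase_of_mem (Finset.mem_univ _), Finset.card_univ, Fintype.card_fin]
  -- sigma1 = μ + t
  have hsplit : sigma1 lam' = μ + t := by
    rw [sigma1, ← Finset.add_sum_erase _ _ (Finset.mem_univ e0)]
  have hSpos : 0 < μ + t := hsplit ▸ hS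
  -- identity
  have hkey : (μ + t)^2 = (μ^2 + Q') + 2 * sigma2 lam' := by
    have := key lam'
    rw [← Finset.add_sum_erase _ lam' (Finset.mem_univ e0),
        ← Finset.add_sum_erase _ (fun j => (lam' j)^2) (Finset.mem_univ e0)] at this
    exact this
  -- Cauchy–Schwarz on erase set
  have hCS : t^2 ≤ ((n:ℝ) - 1) * Q' := by
    have := sq_sum_le_card_mul_sum_sq (s := Finset.univ.erase e0) (f := lam')
    rw [hcard] at this
    have hn1 : ((n - 1 : ℕ) : ℝ) = (n:ℝ) - 1 := by
      have : (1:ℕ) ≤ n := by omega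
      push_cast [Nat.cast_sub this]
      ring
    calc t^2 ≤ ((n-1 : ℕ):ℝ) * Q' := this
      _ = ((n:ℝ) - 1) * Q' := by rw [hn1]
  -- t ≤ (n-1) μ
  have htle : t ≤ ((n:ℝ) - 1) * μ := by
    have : t ≤ ∑ _j ∈ Finset.univ.erase e0, μ := by
      apply Finset.sum_le_sum
      intro j _
      exact hmax j
    rw [Finset.sum_const, hcard, nsmul_eq_mul] at this
    have hn1 : ((n - 1 : ℕ) : ℝ) = (n:ℝ) - 1 := by
      push_cast [Nat.cast_sub (by omega : (1:ℕ) ≤ n)]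
      ring
    linarith [hn1 ▸ this]
  -- μ > 0
  have hμpos : 0 < μ := by
    have : μ + t ≤ (n:ℝ) * μ := by nlinarith
    nlinarith
  have hnR : (2:ℝ) ≤ (n:ℝ) := by exact_mod_cast hn
  rw [ge_iff_le, div_mul_eq_mul_div, div_le_iff₀ (by linarith : (0:ℝ) < (n:ℝ))]
  -- goal : 2 * sigma2 lam' ≤ μ * t * n
  rcases le_or_gt 0 t with htnn | htneg
  · have h1 : 0 ≤ ((n:ℝ)-2) * (t * (((n:ℝ)-1)*μ - t)) :=
      mul_nonneg (by linarith) (mul_nonneg htnn (by linarith))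
    have h3 : ((n:ℝ)-1) * ((μ*t*(n:ℝ)) - 2*sigma2 lam')
        = ((n:ℝ)-2)*(t*(((n:ℝ)-1)*μ - t)) + (((n:ℝ)-1)*Q' - t^2) := by
      linear_combination ((n:ℝ)-1) * hkey
    nlinarith [h1, h3, hCS, mul_pos (show (0:ℝ) < (n:ℝ)-1 by linarith)
      (show (0:ℝ) < (0:ℝ) + 1 by norm_num)]
  · exfalso
    have hp : 0 < 2*((n:ℝ)-1)*μ + ((n:ℝ)-2)*t := by
      nlinarith [mul_nonneg (show (0:ℝ) ≤ (n:ℝ)-2 by linarith) hSpos.le,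
        mul_pos (show (0:ℝ) < (n:ℝ) by linarith) hμpos]
    have hq : 0 < (-t) * (2*((n:ℝ)-1)*μ + ((n:ℝ)-2)*t) := mul_pos (by linarith) hp
    have h5 : ((n:ℝ)-1) * (2*sigma2 lam')
        = -((-t)*(2*((n:ℝ)-1)*μ+((n:ℝ)-2)*t)) - (((n:ℝ)-1)*Q' - t^2) := by
      linear_combination (-(n:ℝ)+1) * hkey
    have h6 : 0 < ((n:ℝ)-1) * sigma2 lam' := mul_pos (by linarith) hσ2
    linarith [hCS]
end
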